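/- For every real-valued càdlàg function x on [0,∞) and every T > 0, limsup_{k→∞} max_{1≤r≤k} |x(rT/k) − x((r−1)T/k)| = sup_{0<t≤T} |x(t) − x(t−)|, where x(t−) denotes the left limit of x at t. -/

import Mathlib

open MeasureTheory Set Filter Topology ProbabilityTheory
open scoped ENNReal NNReal

noncomputable section

namespace RV

/-! ### The space `L²_loc` and the weak dual (`L²_w`) topology -/

/-- Membership in `L²_loc`: measurable, locally square integrable on `(0,T]` for all `T > 0`. -/
def LlocMem (f : ℝ → ℝ) : Prop :=
  Measurable f ∧ ∀ T : ℝ, 0 < T → IntegrableOn (fun t => (f t) ^ 2) (Ioc 0 T) volume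

/-- The space `L²_loc`. -/
def Lloc : Type := {f : ℝ → ℝ // LlocMem f}

lemma zero_mem_Lloc : LlocMem (fun _ => (0 : ℝ)) := by
  refine ⟨measurable_const, fun T hT => ?_⟩
  have h : (fun t : ℝ => ((fun _ : ℝ => (0 : ℝ)) t) ^ 2) = fun _ : ℝ => (0 : ℝ) := by
    funext t; norm_num
  rw [h]
  exact integrableOn_const measure_Ioc_lt_top.ne

open Classical in
/-- Interpret a raw function as an element of `L²_loc` (junk value if not a member). -/
def mkLloc (f : ℝ → ℝ) : Lloc := if h : LlocMem f then ⟨f, h⟩ else ⟨fun _ => 0, zero_mem_Lloc⟩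

/-- The norm `|x|_T = (∫_0^T x(t)² dt)^{1/2}`. -/
def locNorm (T : ℝ) (f : ℝ → ℝ) : ℝ := Real.sqrt (∫ t in Ioc (0 : ℝ) T, (f t) ^ 2)

/-- Test pairs `(T, f)` with `T > 0` and `f ∈ L²[0,T]`. -/
def TestIdx : Type :=
  {p : ℝ × (ℝ → ℝ) // 0 < p.1 ∧ Measurable p.2 ∧
    IntegrableOn (fun t => (p.2 t) ^ 2) (Ioc 0 p.1) volume}

/-- The pairing `x ↦ ∫_0^T x(t) f(t) dt`. -/
def pairing (p : TestIdx) (x : Lloc) : ℝ := ∫ t in Ioc (0 : ℝ) p.1.1, x.1 t * p.1.2 t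

/-- The `L²_w`-topology on `L²_loc`: the initial topology for all the pairings. -/
instance : TopologicalSpace Lloc :=
  ⨅ p : TestIdx, TopologicalSpace.induced (pairing p) inferInstance

instance : MeasurableSpace Lloc := borel Lloc

/-! ### Tightness and convergence in distribution -/

/-- Tightness of the laws of a sequence of random elements of a topological space. -/
def TightLaws {Ω : Type*} [MeasurableSpace Ω] {α : Type*} [TopologicalSpace α]
    (P : Measure Ω) (X : ℕ → Ω → α) : Prop :=
  ∀ ε : ℝ≥0∞, 0 < ε → ∃ K : Set α, IsCompact K ∧ ∀ n, P ((X n) ⁻¹' Kᶜ) ≤ ε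

/-- Tightness of a sequence of real random variables. -/
def TightReal {Ω : Type*} [MeasurableSpace Ω] (P : Measure Ω) (g : ℕ → Ω → ℝ) : Prop :=
  ∀ ε : ℝ≥0∞, 0 < ε → ∃ M : ℝ, ∀ n, P {ω | M < |g n ω|} ≤ ε

/-- Convergence in distribution (weak convergence of laws) of random elements of a
topological space, the limit being allowed to live on a different probability space. -/
def ConvInDist {Ω Ω' α : Type*} [MeasurableSpace Ω] [MeasurableSpace Ω'] [TopologicalSpace α]
    (P : Measure Ω) (P' : Measure Ω') (X : ℕ → Ω → α) (Y : Ω' → α) : Prop :=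
  ∀ F : BoundedContinuousFunction α ℝ,
    Tendsto (fun n => ∫ ω, F (X n ω) ∂P) atTop (𝓝 (∫ ω, F (Y ω) ∂P'))

/-- Convergence of finite dimensional distributions, for times in `S`. -/
def FddConvOn {Ω Ω' β : Type*} [MeasurableSpace Ω] [MeasurableSpace Ω'] [TopologicalSpace β]
    (S : Set ℝ) (P : Measure Ω) (P' : Measure Ω')
    (X : ℕ → Ω → ℝ → β) (Y : Ω' → ℝ → β) : Prop :=
  ∀ (m : ℕ) (ts : Fin m → ℝ), (∀ i, ts i ∈ S) →
    ConvInDist P P' (fun n ω => fun i => X n ω (ts i)) (fun ω => fun i => Y ω (ts i))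

/-- Equality of all finite dimensional distributions (over nonnegative times). -/
def FddEq {Ω Ω' β : Type*} [MeasurableSpace Ω] [MeasurableSpace Ω'] [MeasurableSpace β]
    (P : Measure Ω) (P' : Measure Ω') (X : Ω → ℝ → β) (Y : Ω' → ℝ → β) : Prop :=
  ∀ (m : ℕ) (ts : Fin m → ℝ), (∀ i, 0 ≤ ts i) →
    Measure.map (fun ω => fun i => X ω (ts i)) P
      = Measure.map (fun ω => fun i => Y ω (ts i)) P'

/-- The integral operator `I(x)(t) = ∫_0^t x(s) ds`. -/
def Itg (x : ℝ → ℝ) (t : ℝ) : ℝ := ∫ s in Ioc (0 : ℝ) t, x s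

/-! ### Càdlàg paths, monotone paths and inverses -/

/-- `f` is càdlàg on `[0,∞)`: right-continuous everywhere on `[0,∞)`,
with left limits at every `t > 0`. -/
def IsCadlag {E : Type*} [TopologicalSpace E] (f : ℝ → E) : Prop :=
  (∀ t : ℝ, 0 ≤ t → ContinuousWithinAt f (Ici t) t) ∧
  (∀ t : ℝ, 0 < t → ∃ L : E, Tendsto f (𝓝[<] t) (𝓝 L))

/-- The right-continuous generalized inverse `τ(s) = inf{t ≥ 0 : y(t) > s}`. -/
def rinv (y : ℝ → ℝ) (s : ℝ) : ℝ := sInf {t : ℝ | 0 ≤ t ∧ s < y t}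

/-- The set `D_↑`: càdlàg, non-negative, non-decreasing, tending to infinity. -/
def DUp (y : ℝ → ℝ) : Prop :=
  IsCadlag y ∧ (∀ t : ℝ, 0 ≤ t → 0 ≤ y t) ∧ MonotoneOn y (Ici 0) ∧ Tendsto y atTop atTop

/-! ### The moduli `𝕄`, `𝕁`, `ℂ` and the associated tightness/weak convergence notions -/

/-- `𝕄(a,b,c)`: distance from `b` to the segment `[a,c]`. -/
def MM {E : Type*} [SeminormedAddCommGroup E] [NormedSpace ℝ E] (a b c : E) : ℝ :=
  Metric.infDist b (segment ℝ a c)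

/-- `𝕁(a,b,c) = min(‖b-a‖, ‖b-c‖)`. -/
def JJ {E : Type*} [SeminormedAddCommGroup E] (a b c : E) : ℝ := min ‖b - a‖ ‖b - c‖

/-- `ℂ(a,b,c) = ‖c-a‖`. -/
def CC {E : Type*} [SeminormedAddCommGroup E] (a b c : E) : ℝ := ‖c - a‖

/-- The oscillation modulus `ω_H(x, δ, T)` built from a functional `H` on triples. -/
def osc {E : Type*} (H : E → E → E → ℝ) (x : ℝ → E) (δ T : ℝ) : ℝ :=
  sSup {r : ℝ | ∃ t1 t2 t3 : ℝ, 0 ≤ t1 ∧ t1 < t2 ∧ t2 < t3 ∧ t3 ≤ T ∧ t3 - t1 < δ ∧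
    r = H (x t1) (x t2) (x t3)}

/-- The modulus condition in `H₁`-tightness:
`lim_{δ→0⁺} limsup_n P(ω_H(X_n,δ,T) > ε) = 0` for all `ε, T > 0`. -/
def TightMod {Ω E : Type*} [MeasurableSpace Ω] (H : E → E → E → ℝ)
    (P : Measure Ω) (X : ℕ → Ω → ℝ → E) : Prop :=
  ∀ ε T : ℝ, 0 < ε → 0 < T →
    Tendsto (fun δ : ℝ => limsup (fun n => P {ω | ε < osc H (X n ω) δ T}) atTop)
      (𝓝[>] (0 : ℝ)) (𝓝 (0 : ℝ≥0∞))

/-- Tightness of the marginals over a dense set of times containing `0`. -/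
def TightMarginals {Ω E : Type*} [MeasurableSpace Ω] [TopologicalSpace E]
    (P : Measure Ω) (X : ℕ → Ω → ℝ → E) : Prop :=
  ∃ S : Set ℝ, S ⊆ Ici 0 ∧ (0 : ℝ) ∈ S ∧ Ici (0 : ℝ) ⊆ closure S ∧
    ∀ t ∈ S, ∀ ε : ℝ≥0∞, 0 < ε → ∃ K : Set E, IsCompact K ∧ ∀ n, P {ω | X n ω t ∉ K} ≤ ε

/-- `H₁`-tightness of a sequence of `D`-valued processes. -/
def TightH {Ω E : Type*} [MeasurableSpace Ω] [TopologicalSpace E] (H : E → E → E → ℝ)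
    (P : Measure Ω) (X : ℕ → Ω → ℝ → E) : Prop :=
  TightMarginals P X ∧ TightMod H P X

/-- Weak convergence in the `H₁`-topology: `H₁`-tightness plus convergence of the
finite dimensional distributions over a dense set of times containing `0`. -/
def WeakH {Ω Ω' E : Type*} [MeasurableSpace Ω] [MeasurableSpace Ω'] [TopologicalSpace E]
    (H : E → E → E → ℝ) (P : Measure Ω) (P' : Measure Ω')
    (X : ℕ → Ω → ℝ → E) (Y : Ω' → ℝ → E) : Prop :=
  TightH H P X ∧ ∃ S : Set ℝ, S ⊆ Ici 0 ∧ (0 : ℝ) ∈ S ∧ Ici (0 : ℝ) ⊆ closure S ∧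
    FddConvOn S P P' X Y

/-- `M₁`-convergence of deterministic càdlàg functions: pointwise convergence on a dense
set of times containing `0`, plus the vanishing `𝕄`-modulus condition. -/
def M1ConvDet {E : Type*} [SeminormedAddCommGroup E] [NormedSpace ℝ E]
    (x : ℕ → ℝ → E) (y : ℝ → E) : Prop :=
  (∃ S : Set ℝ, S ⊆ Ici 0 ∧ (0 : ℝ) ∈ S ∧ Ici (0 : ℝ) ⊆ closure S ∧
      ∀ t ∈ S, Tendsto (fun n => x n t) atTop (𝓝 (y t))) ∧
  ∀ T : ℝ, 0 < T →
    Tendsto (fun δ : ℝ => limsup (fun n => osc MM (x n) δ T) atTop) (𝓝[>] (0 : ℝ)) (𝓝 (0 : ℝ))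

/-! ### Martingales, compensators, Brownian motion, Lévy processes -/

/-- A martingale on the nonnegative time axis. -/
def MartingaleNN {Ω : Type*} {m0 : MeasurableSpace Ω} (ℱ : Filtration ℝ m0)
    (P : Measure Ω) (M : ℝ → Ω → ℝ) : Prop :=
  (∀ t : ℝ, 0 ≤ t → Measurable[ℱ t] (M t)) ∧
  (∀ t : ℝ, 0 ≤ t → Integrable (M t) P) ∧
  (∀ s t : ℝ, 0 ≤ s → s ≤ t → P[M t|ℱ s] =ᵐ[P] M s)

/-- The predictable σ-algebra on `ℝ × Ω` associated with a filtration. -/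
def predictableSigma {Ω : Type*} (m0 : MeasurableSpace Ω) (ℱ : Filtration ℝ m0) :
    MeasurableSpace (ℝ × Ω) :=
  MeasurableSpace.generateFrom
    ({S | ∃ s t : ℝ, ∃ A : Set Ω, 0 ≤ s ∧ s < t ∧ MeasurableSet[ℱ s] A ∧ S = Ioc s t ×ˢ A} ∪
     {S | ∃ A : Set Ω, MeasurableSet[ℱ 0] A ∧ S = ({0} : Set ℝ) ×ˢ A})

/-- `A = ⟨M⟩` is the predictable compensator (predictable quadratic variation) of the
square integrable martingale `M`: a predictable, non-decreasing càdlàg process vanishing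
at `0` such that `M² - A` is a martingale. -/
def IsCompensator {Ω : Type*} {m0 : MeasurableSpace Ω} (ℱ : Filtration ℝ m0)
    (P : Measure Ω) (M A : ℝ → Ω → ℝ) : Prop :=
  (∀ ω, A 0 ω = 0) ∧
  (∀ ω, MonotoneOn (fun t => A t ω) (Ici 0)) ∧
  (∀ ω, IsCadlag (fun t => A t ω)) ∧
  (@Measurable (ℝ × Ω) ℝ (predictableSigma m0 ℱ) _ (fun p => A p.1 p.2)) ∧
  MartingaleNN ℱ P (fun t ω => (M t ω) ^ 2 - A t ω)

/-- `Q = [M]` is the quadratic variation of the square integrable martingale `M`: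
an adapted non-decreasing càdlàg process vanishing at `0` such that `M² - Q` is a
martingale and whose jumps are the squared jumps of `M`. -/
def IsQuadVar {Ω : Type*} {m0 : MeasurableSpace Ω} (ℱ : Filtration ℝ m0)
    (P : Measure Ω) (M Q : ℝ → Ω → ℝ) : Prop :=
  (∀ ω, Q 0 ω = 0) ∧
  (∀ ω, MonotoneOn (fun t => Q t ω) (Ici 0)) ∧
  (∀ ω, IsCadlag (fun t => Q t ω)) ∧
  (∀ t : ℝ, 0 ≤ t → Measurable[ℱ t] (Q t)) ∧
  MartingaleNN ℱ P (fun t ω => (M t ω) ^ 2 - Q t ω) ∧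
  (∀ ω, ∀ t : ℝ, 0 < t →
    Q t ω - Function.leftLim (fun s => Q s ω) t
      = (M t ω - Function.leftLim (fun s => M s ω) t) ^ 2)

/-- A standard Brownian motion (on `[0,∞)`). -/
structure IsBrownian {Ω : Type*} [MeasurableSpace Ω] (P : Measure Ω) (W : Ω → ℝ → ℝ) :
    Prop where
  init : ∀ ω, W ω 0 = 0
  cont : ∀ ω, ContinuousOn (W ω) (Ici 0)
  meas : ∀ t : ℝ, Measurable (fun ω => W ω t)
  incr_law : ∀ s t : ℝ, 0 ≤ s → s ≤ t →
    Measure.map (fun ω => W ω t - W ω s) P = gaussianReal 0 (Real.toNNReal (t - s))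
  indep_incr : ∀ (m : ℕ) (ts : Fin (m + 1) → ℝ), (∀ i, 0 ≤ ts i) → Monotone ts →
    iIndepFun
      (fun i : Fin m => fun ω => W ω (ts i.succ) - W ω (ts i.castSucc)) P

/-- A Brownian motion with respect to a filtration `𝔽`. -/
structure IsFBrownian {Ω : Type*} [mΩ : MeasurableSpace Ω] (P : Measure Ω)
    (ℱ : Filtration ℝ mΩ) (W : Ω → ℝ → ℝ) extends IsBrownian P W : Prop where
  adapted : ∀ t : ℝ, 0 ≤ t → Measurable[ℱ t] (fun ω => W ω t)
  indep_past : ∀ s t : ℝ, 0 ≤ s → s ≤ t →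
    Indep (MeasurableSpace.comap (fun ω => W ω t - W ω s) (borel ℝ)) (ℱ s) P

/-- An inhomogeneous Lévy process: càdlàg, adapted, starting at `0`, with increments
independent of the past (hence with deterministic characteristics) and without fixed
times of discontinuity. -/
structure IsInhomLevy {Ω : Type*} [mΩ : MeasurableSpace Ω] (P : Measure Ω)
    (ℱ : Filtration ℝ mΩ) (A : Ω → ℝ → ℝ) : Prop where
  init : ∀ ω, A ω 0 = 0
  cadlag : ∀ ω, IsCadlag (A ω)
  adapted : ∀ t : ℝ, 0 ≤ t → Measurable[ℱ t] (fun ω => A ω t)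
  indep_incr : ∀ s t : ℝ, 0 ≤ s → s ≤ t →
    Indep (MeasurableSpace.comap (fun ω => A ω t - A ω s) (borel ℝ)) (ℱ s) P
  no_fixed_disc : ∀ t : ℝ, 0 < t → ∀ᵐ ω ∂P, Tendsto (A ω) (𝓝[<] t) (𝓝 (A ω t))


/-- A packaged probability space, used to state existential conclusions
("there exists a probability space carrying ..."). -/
structure ProbPack where
  carrier : Type
  inst : MeasurableSpace carrier
  P : @Measure carrier inst
  isProb : @IsProbabilityMeasure carrier inst P

attribute [instance] ProbPack.inst ProbPack.isProb

end RV

/-! Near a time `t`, a càdlàg `x` stays within `ε` of `x t` to the right of `t` and of `x (t-)`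
to its left. So the increment of `x` over a short interval `[u, w]` is at most `ε`, unless
`u < t ≤ w`, in which case it is within `ε` of the jump `|Δx t|`. A Lebesgue number for the
cover of `[0, T]` by such neighbourhoods gives a `δ` such that every increment over an interval
of length `< δ` is at most `sup |Δx| + ε`, which bounds the `limsup` above. Conversely, the grid
interval `((r - 1) T / k, r T / k]` containing a jump time `t` shrinks to `t`, so its increment
tends to `|Δx t|`. -/

namespace RV

variable {x : ℝ → ℝ}

/-- On `t ≤ 0` the filter `𝓝[Ico 0 t] t` is `⊥`, so this holds for every `t`. -/
lemma IsCadlag.tendsto_nhdsWithin_Ico_leftLim (hx : IsCadlag x) (t : ℝ) :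
    Tendsto x (𝓝[Ico 0 t] t) (𝓝 (Function.leftLim x t)) := by
  rcases le_or_gt t 0 with ht | ht
  · simp [Ico_eq_empty_of_le ht]
  obtain ⟨L, hL⟩ := hx.2 t ht
  rw [leftLim_eq_of_tendsto hL]
  exact hL.mono_left (nhdsWithin_mono _ fun s hs => hs.2)

lemma IsCadlag.eventually_abs_sub_lt (hx : IsCadlag x) {t ε : ℝ} (ht : 0 ≤ t) (hε : 0 < ε) :
    ∀ᶠ s in 𝓝 t,
      (t ≤ s → |x s - x t| < ε) ∧ (s ∈ Ico 0 t → |x s - Function.leftLim x t| < ε) := by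
  have hright := (Metric.tendsto_nhds.1 (hx.1 t ht).tendsto ε hε)
  have hleft := (Metric.tendsto_nhds.1 (hx.tendsto_nhdsWithin_Ico_leftLim t) ε hε)
  simp only [Real.dist_eq] at hright hleft
  exact (eventually_nhdsWithin_iff.1 hright).and (eventually_nhdsWithin_iff.1 hleft)

lemma IsCadlag.bddAbove_abs_image {K : Set ℝ} (hx : IsCadlag x) (hK : IsCompact K)
    (hK0 : K ⊆ Ici 0) : BddAbove ((fun s => |x s|) '' K) := by
  refine hK.induction_on (p := fun S => BddAbove ((fun s => |x s|) '' S)) (by simp)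
    (fun S S' hSS' h => h.mono (image_mono hSS'))
    (fun S S' hS hS' => by rw [image_union]; exact hS.union hS') fun t htK => ?_
  refine ⟨_, inter_mem_nhdsWithin K (hx.eventually_abs_sub_lt (hK0 htK) one_pos),
    |x t| + |Function.leftLim x t| + 1, ?_⟩
  rintro _ ⟨s, ⟨hsK, hright, hleft⟩, rfl⟩
  rcases le_or_gt t s with hts | hst
  · linarith [hright hts, abs_sub_abs_le_abs_sub (x s) (x t), abs_nonneg (Function.leftLim x t)]
  · linarith [hleft ⟨hK0 hsK, hst⟩, abs_sub_abs_le_abs_sub (x s) (Function.leftLim x t),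
      abs_nonneg (x t)]

lemma IsCadlag.abs_leftLim_le (hx : IsCadlag x) {t M : ℝ} (ht : 0 < t)
    (hM : ∀ s ∈ Ico 0 t, |x s| ≤ M) : |Function.leftLim x t| ≤ M := by
  have : (𝓝[Ico 0 t] t).NeBot := by
    rw [← mem_closure_iff_nhdsWithin_neBot, closure_Ico ht.ne]; exact ⟨ht.le, le_rfl⟩
  exact le_of_tendsto (hx.tendsto_nhdsWithin_Ico_leftLim t).abs
    (eventually_nhdsWithin_of_forall hM)

lemma abs_abs_sub_sub_abs_sub_le (a b c d : ℝ) :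
    |(|a - b| - |c - d|)| ≤ |a - c| + |b - d| :=
  (abs_abs_sub_abs_le_abs_sub _ _).trans <| by
    rw [show a - b - (c - d) = (a - c) - (b - d) by ring]; exact abs_sub _ _

lemma IsCadlag.exists_mem_nhds_abs_sub_le (hx : IsCadlag x) {t ε : ℝ} (ht : 0 ≤ t)
    (hε : 0 < ε) :
    ∃ U ∈ 𝓝 t, ∀ u ∈ U, ∀ w ∈ U, 0 ≤ u → u ≤ w →
      |x w - x u| ≤ ε ∨ (u < t ∧ t ≤ w ∧ |x w - x u| ≤ |x t - Function.leftLim x t| + ε) := by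
  refine ⟨_, hx.eventually_abs_sub_lt ht (half_pos hε), ?_⟩
  rintro u ⟨huR, huL⟩ w ⟨hwR, hwL⟩ hu huw
  set L := Function.leftLim x t
  rcases le_or_gt t u with htu | hut
  · left
    linarith [abs_sub_le (x w) (x t) (x u), abs_sub_comm (x t) (x u), huR htu,
      hwR (htu.trans huw)]
  rcases lt_or_ge w t with hwt | htw
  · left
    linarith [abs_sub_le (x w) L (x u), abs_sub_comm L (x u), huL ⟨hu, hut⟩,
      hwL ⟨hu.trans huw, hwt⟩]
  · right
    refine ⟨hut, htw, ?_⟩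
    linarith [(abs_le.1 (abs_abs_sub_sub_abs_sub_le (x w) (x u) (x t) L)).2, huL ⟨hu, hut⟩,
      hwR htw]

lemma IsCadlag.exists_pos_abs_sub_le (hx : IsCadlag x) {T c ε : ℝ} (hc0 : 0 ≤ c)
    (hc : ∀ t ∈ Ioc 0 T, |x t - Function.leftLim x t| ≤ c) (hε : 0 < ε) :
    ∃ δ > 0, ∀ u ∈ Icc 0 T, ∀ w ∈ Icc 0 T, u ≤ w → w - u < δ → |x w - x u| ≤ c + ε := by
  choose U hU hUinc using
    fun t (ht : t ∈ Icc 0 T) => hx.exists_mem_nhds_abs_sub_le ht.1 hε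
  obtain ⟨V, hV, hVU⟩ := lebesgue_number_lemma_nhds' isCompact_Icc hU
  obtain ⟨δ, hδ, hδV⟩ := Metric.mem_uniformity_dist.1 hV
  refine ⟨δ, hδ, fun u hu w hw huw hwu => ?_⟩
  obtain ⟨⟨t, ht⟩, hball⟩ := hVU u hu
  have hdist : dist u w < δ := by
    rwa [Real.dist_eq, abs_sub_comm, abs_of_nonneg (sub_nonneg.2 huw)]
  rcases hUinc t ht u (hball (refl_mem_uniformity hV)) w (hball (hδV hdist)) hu.1 huw with
    h | ⟨hut, htw, h⟩
  · linarith
  · linarith [hc t ⟨hu.1.trans_lt hut, htw.trans hw.2⟩]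

/-- `D(x, k, T)`; for `k = 0` it is `0`, the supremum of the empty family. -/
def maxGridIncrement (x : ℝ → ℝ) (k : ℕ) (T : ℝ) : ℝ :=
  ⨆ r : Fin k, |x (((r : ℕ) + 1) * T / k) - x ((r : ℕ) * T / k)|

lemma maxGridIncrement_nonneg (x : ℝ → ℝ) (k : ℕ) (T : ℝ) : 0 ≤ maxGridIncrement x k T :=
  Real.iSup_nonneg fun _ => abs_nonneg _

lemma abs_sub_le_maxGridIncrement (x : ℝ → ℝ) {k : ℕ} (T : ℝ) (r : Fin k) :
    |x (((r : ℕ) + 1) * T / k) - x ((r : ℕ) * T / k)| ≤ maxGridIncrement x k T :=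
  le_ciSup (f := fun r : Fin k => |x (((r : ℕ) + 1) * T / k) - x ((r : ℕ) * T / k)|)
    (finite_range _).bddAbove r

lemma maxGridIncrement_le {k : ℕ} {T c : ℝ} (hc : 0 ≤ c)
    (h : ∀ r : Fin k, |x (((r : ℕ) + 1) * T / k) - x ((r : ℕ) * T / k)| ≤ c) :
    maxGridIncrement x k T ≤ c :=
  Real.iSup_le h hc

lemma natCast_mul_div_mem_Icc {i k : ℕ} {T : ℝ} (hT : 0 ≤ T) (hik : i ≤ k) :
    (i : ℝ) * T / k ∈ Icc 0 T := by
  refine ⟨by positivity, div_le_of_le_mul₀ k.cast_nonneg hT ?_⟩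
  rw [mul_comm T]
  exact mul_le_mul_of_nonneg_right (by exact_mod_cast hik) hT

lemma IsCadlag.eventually_maxGridIncrement_le (hx : IsCadlag x) {T c ε : ℝ} (hT : 0 ≤ T)
    (hc0 : 0 ≤ c) (hc : ∀ t ∈ Ioc 0 T, |x t - Function.leftLim x t| ≤ c) (hε : 0 < ε) :
    ∀ᶠ k : ℕ in atTop, maxGridIncrement x k T ≤ c + ε := by
  obtain ⟨δ, hδ, hinc⟩ := hx.exists_pos_abs_sub_le hc0 hc hε
  filter_upwards [(tendsto_const_div_atTop_nhds_zero_nat T).eventually (gt_mem_nhds hδ)]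
    with k hk
  refine maxGridIncrement_le (by linarith) fun r => ?_
  have hsucc := natCast_mul_div_mem_Icc hT r.isLt
  push_cast at hsucc
  exact hinc _ (natCast_mul_div_mem_Icc hT r.isLt.le) _ hsucc (by gcongr; linarith)
    (lt_of_eq_of_lt (by ring) hk)

lemma exists_gridIndex {k : ℕ} {t T : ℝ} (hk : 0 < k) (ht : 0 < t) (htT : t ≤ T) :
    ∃ r : Fin k, (r : ℝ) * T / k < t ∧ t ≤ ((r : ℝ) + 1) * T / k := by
  have hT : 0 < T := ht.trans_le htT
  have hk' : (0 : ℝ) < k := by exact_mod_cast hk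
  set m := ⌈t * k / T⌉₊ with hm
  have hm1 : 1 ≤ m := Nat.ceil_pos.2 (by positivity)
  have hmk : m ≤ k := Nat.ceil_le.2 (by rw [div_le_iff₀ hT]; nlinarith)
  have hm_lt : (m : ℝ) - 1 < t * k / T := by
    linarith [Nat.ceil_lt_add_one (show 0 ≤ t * k / T by positivity)]
  have hm_ge : t * k / T ≤ m := Nat.le_ceil _
  refine ⟨⟨m - 1, by omega⟩, ?_, ?_⟩ <;>
    simp only [Nat.cast_sub hm1, Nat.cast_one, sub_add_cancel]
  · rw [div_lt_iff₀ hk']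
    rw [lt_div_iff₀ hT] at hm_lt
    linarith
  · rw [le_div_iff₀ hk']
    rw [div_le_iff₀ hT] at hm_ge
    linarith

lemma IsCadlag.abs_jump_le_limsup_maxGridIncrement (hx : IsCadlag x) {t T : ℝ}
    (hbdd : IsBoundedUnder (· ≤ ·) atTop fun k => maxGridIncrement x k T)
    (ht : 0 < t) (htT : t ≤ T) :
    |x t - Function.leftLim x t| ≤ limsup (fun k => maxGridIncrement x k T) atTop := by
  refine le_of_forall_pos_le_add fun ε hε => sub_le_iff_le_add.1 ?_
  obtain ⟨η, hη, hnear⟩ :=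
    Metric.eventually_nhds_iff.1 (hx.eventually_abs_sub_lt ht.le (half_pos hε))
  refine le_limsup_of_frequently_le (Eventually.frequently ?_) hbdd
  filter_upwards [(tendsto_const_div_atTop_nhds_zero_nat T).eventually (gt_mem_nhds hη),
    eventually_gt_atTop 0] with k hkη hk
  obtain ⟨r, hut, htw⟩ := exists_gridIndex hk ht htT
  refine le_trans ?_ (abs_sub_le_maxGridIncrement x T r)
  set u := (r : ℝ) * T / k
  set w := ((r : ℝ) + 1) * T / k
  have hwu : w - u = T / k := by ring
  have hu : 0 ≤ u := (natCast_mul_div_mem_Icc (ht.trans_le htT).le r.isLt.le).1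
  have hxu := (hnear (y := u) (by rw [Real.dist_eq, abs_sub_lt_iff]; constructor <;> linarith)).2
    ⟨hu, hut⟩
  have hxw := (hnear (y := w) (by rw [Real.dist_eq, abs_sub_lt_iff]; constructor <;> linarith)).1
    htw
  linarith [(abs_le.1 (abs_abs_sub_sub_abs_sub_le (x w) (x u) (x t) (Function.leftLim x t))).1]

/-- Remark `error`. For every càdlàg `x` and `T > 0`,
`limsup_k max_{1≤r≤k} |x(rT/k) - x((r-1)T/k)| = sup_{0<t≤T} |Δx(t)|`. -/
theorem stmt_14 (x : ℝ → ℝ) (hx : IsCadlag x) (T : ℝ) (hT : 0 < T) :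
    limsup (fun k : ℕ => ⨆ r : Fin k, |x (((r : ℕ) + 1) * T / k) - x ((r : ℕ) * T / k)|)
        atTop
      = sSup {v : ℝ | ∃ t : ℝ, 0 < t ∧ t ≤ T ∧ v = |x t - Function.leftLim x t|} := by
  set V := {v : ℝ | ∃ t : ℝ, 0 < t ∧ t ≤ T ∧ v = |x t - Function.leftLim x t|}
  obtain ⟨M, hM⟩ := hx.bddAbove_abs_image isCompact_Icc fun _ h => h.1
  rw [mem_upperBounds, forall_mem_image] at hM
  have hV : BddAbove V := by
    refine ⟨M + M, ?_⟩
    rintro _ ⟨t, ht, htT, rfl⟩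
    have hL := hx.abs_leftLim_le ht fun s hs => hM ⟨hs.1, hs.2.le.trans htT⟩
    linarith [abs_sub (x t) (Function.leftLim x t), hM ⟨ht.le, htT⟩]
  have hVT : |x T - Function.leftLim x T| ∈ V := ⟨T, hT, le_rfl, rfl⟩
  have hc0 : 0 ≤ sSup V := (abs_nonneg _).trans (le_csSup hV hVT)
  have hc : ∀ t ∈ Ioc 0 T, |x t - Function.leftLim x t| ≤ sSup V :=
    fun t ht => le_csSup hV ⟨t, ht.1, ht.2, rfl⟩
  have hgrid := fun ε (hε : (0 : ℝ) < ε) =>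
    hx.eventually_maxGridIncrement_le hT.le hc0 hc hε
  refine le_antisymm (le_of_forall_pos_le_add fun ε hε => limsup_le_of_le ?_ (hgrid ε hε))
    (csSup_le ⟨_, hVT⟩ ?_)
  · exact (isBoundedUnder_of ⟨0, fun k => maxGridIncrement_nonneg x k T⟩).isCoboundedUnder_le
  · rintro _ ⟨t, ht, htT, rfl⟩
    exact hx.abs_jump_le_limsup_maxGridIncrement ⟨_, hgrid 1 one_pos⟩ ht htT

end RV
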